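/- arXiv:cs/0309048 — 3 statements merged into one kernel-verified Lean document; each statement's English description precedes it below -/
import Mathlib

section
/- Let ι be a countable index set and P : ι → ℝ a probability bias with 0 < P w for every w and ∑_w P w ≤ 1. Fix w* ∈ ι and a natural number f ≥ 1, and let i* be the least positive integer with 2^{i*} · P w* ≥ f (this i* exists). Then the cumulative time budget over phases 1, …, i*, namely ∑_{i=1}^{i*} ∑_{w : P w ≥ 2^{-i}} 2^i · P w, is at most 4·f / (P w*). -/
lemma biops_geom_aux : ∀ n : ℕ, ∑ i ∈ Finset.Icc 1 n, (2:ℝ)^i ≤ 2 * 2^n := by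
  intro n
  induction n with
  | zero => simp
  | succ n ih =>
    rw [Finset.sum_Icc_succ_top (by omega)]
    have : (2:ℝ)^(n+1) = 2 * 2^n := by ring
    nlinarith [pow_pos (by norm_num : (0:ℝ) < 2) n]

/-- Method 5.1 (BIOPS): if `i*` is the least positive integer with
`2^{i*} * P w* ≥ f`, then the cumulative time budget over phases `1, …, i*`,
namely `∑_{i=1}^{i*} ∑_{w : P w ≥ 2^{-i}} 2^i * P w`, is at most
`4 * f / P w*`. -/
theorem biops_cumulative_budget {ι : Type*} [Countable ι] (P : ι → ℝ)
    (hPpos : ∀ w, 0 < P w) (hPsum : Summable P) (hPle : ∑' w, P w ≤ 1)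
    (wstar : ι) (f : ℕ) (hf : 1 ≤ f) (istar : ℕ)
    (histar : IsLeast {j : ℕ | 0 < j ∧ (f : ℝ) ≤ 2 ^ j * P wstar} istar) :
    (∑ i ∈ Finset.Icc 1 istar,
        ∑' w : {w : ι // (2:ℝ) ^ (-(i:ℤ)) ≤ P w}, (2:ℝ) ^ i * P w.1)
      ≤ 4 * f / P wstar := by
  obtain ⟨⟨hi0, hile⟩, hmin⟩ := histar
  have hPw : 0 < P wstar := hPpos wstar
  have hP1 : P wstar ≤ 1 :=
    le_trans (Summable.le_tsum hPsum wstar (fun _ _ => (hPpos _).le)) hPle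
  have hinner : ∀ i : ℕ,
      (∑' w : {w : ι // (2:ℝ)^(-(i:ℤ)) ≤ P w}, (2:ℝ)^i * P w.1) ≤ 2^i := by
    intro i
    rw [tsum_mul_left]
    have h1 : (∑' w : {w : ι // (2:ℝ)^(-(i:ℤ)) ≤ P w}, P w.1) ≤ ∑' w, P w := by
      exact Summable.tsum_subtype_le P _ (fun w => (hPpos w).le) hPsum
    have h2 : (∑' w : {w : ι // (2:ℝ)^(-(i:ℤ)) ≤ P w}, P w.1) ≤ 1 := h1.trans hPle
    nlinarith [pow_pos (by norm_num : (0:ℝ) < 2) i]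
  have hstep : (∑ i ∈ Finset.Icc 1 istar,
        ∑' w : {w : ι // (2:ℝ) ^ (-(i:ℤ)) ≤ P w}, (2:ℝ) ^ i * P w.1)
      ≤ 2 * 2^istar := by
    calc _ ≤ ∑ i ∈ Finset.Icc 1 istar, (2:ℝ)^i :=
          Finset.sum_le_sum (fun i _ => hinner i)
      _ ≤ 2 * 2^istar := biops_geom_aux istar
  refine hstep.trans ?_
  rw [le_div_iff₀ hPw]
  have hfpos : (1:ℝ) ≤ f := by exact_mod_cast hf
  rcases eq_or_lt_of_le (show 1 ≤ istar from hi0) with h1 | h2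
  · -- istar = 1
    rw [← h1]
    norm_num
    nlinarith
  · -- istar ≥ 2, so istar - 1 not in set
    have hnot : ¬ ((f : ℝ) ≤ 2 ^ (istar - 1) * P wstar) := by
      intro hc
      have := hmin ⟨by omega, hc⟩
      omega
    push_neg at hnot
    have hpow : (2:ℝ)^istar = 2 * 2^(istar-1) := by
      rw [← pow_succ']
      congr 1
      omega
    nlinarith
end

section
/- (Theorem 5.1, asymptotic optimality of BIOPS.) Let ι be a countable index set and P : ι → ℝ a probability bias with 0 < P w for every w and ∑_w P w ≤ 1. Fix w* ∈ ι and let f : ℕ → ℕ satisfy f k ≥ 1 for every k, where f k is the number of steps the proof technique w* needs to produce a proof of difficulty measure k. Then there exists a constant c independent of k (one may take c = 4 / (P w*)) such that for every k, the cumulative time budget ∑_{i=1}^{i*(k)} ∑_{w : P w ≥ 2^{-i}} 2^i · P w over the phases up to and including the first phase i*(k) in which w* is allotted at least f k steps is at most c · f k; i.e., Method 5.1 needs at most O(f(k)) steps. -/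
lemma biops_geom_sum_le (n : ℕ) :
    ∑ i ∈ Finset.Icc 1 n, (2:ℝ) ^ i ≤ 2 ^ (n + 1) - 2 := by
  induction n with
  | zero => simp
  | succ n ih =>
      rw [← Finset.Ico_add_one_right_eq_Icc, Finset.sum_Ico_succ_top (by omega),
        Finset.Ico_add_one_right_eq_Icc]
      have : (2:ℝ) ^ (n + 1 + 1) - 2 = (2 ^ (n + 1) - 2) + 2 ^ (n + 1) := by ring
      rw [this]
      exact add_le_add_left ih _

/-- Theorem 5.1 (asymptotic optimality of BIOPS): if the proof technique `w*`
needs `f k` steps to produce a proof of difficulty measure `k`, then there is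
a constant `c` independent of `k` (one may take `c = 4 / P w*`) such that for
every `k`, the cumulative time budget over the phases up to and including the
first phase `i*(k)` in which `w*` is allotted at least `f k` steps is at most
`c * f k`. -/
theorem biops_asymptotically_optimal {ι : Type*} [Countable ι] (P : ι → ℝ)
    (hPpos : ∀ w, 0 < P w) (hPsum : Summable P) (hPle : ∑' w, P w ≤ 1)
    (wstar : ι) (f : ℕ → ℕ) (hf : ∀ k, 1 ≤ f k) :
    ∃ c : ℝ, c = 4 / P wstar ∧
      ∀ k : ℕ, ∀ istar : ℕ,
        IsLeast {j : ℕ | 0 < j ∧ (f k : ℝ) ≤ 2 ^ j * P wstar} istar →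
        (∑ i ∈ Finset.Icc 1 istar,
            ∑' w : {w : ι // (2:ℝ) ^ (-(i:ℤ)) ≤ P w}, (2:ℝ) ^ i * P w.1)
          ≤ c * f k := by
  refine ⟨4 / P wstar, rfl, ?_⟩
  intro k istar ⟨⟨hpos, hle⟩, hmin⟩
  have hP := hPpos wstar
  have hP1 : P wstar ≤ 1 :=
    le_trans (hPsum.le_tsum wstar fun b _ => (hPpos b).le) hPle
  have hfk : (1:ℝ) ≤ (f k : ℝ) := by exact_mod_cast hf k
  -- each inner tsum is at most 2^i
  have key : ∀ i ∈ Finset.Icc 1 istar,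
      (∑' w : {w : ι // (2:ℝ) ^ (-(i:ℤ)) ≤ P w}, (2:ℝ) ^ i * P w.1)
        ≤ (2:ℝ) ^ i := by
    intro i _
    rw [tsum_mul_left]
    have hsub : (∑' w : {w : ι // (2:ℝ) ^ (-(i:ℤ)) ≤ P w}, P w.1) ≤ ∑' w, P w :=
      (hPsum.subtype _).tsum_le_tsum_of_inj Subtype.val Subtype.val_injective
        (fun a _ => (hPpos a).le) (fun _ => le_rfl)
        hPsum
    calc (2:ℝ) ^ i * ∑' w : {w : ι // (2:ℝ) ^ (-(i:ℤ)) ≤ P w}, P w.1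
        ≤ (2:ℝ) ^ i * 1 := by
          apply mul_le_mul_of_nonneg_left (le_trans hsub hPle) (by positivity)
      _ = (2:ℝ) ^ i := mul_one _
  have hsum1 : (∑ i ∈ Finset.Icc 1 istar,
      ∑' w : {w : ι // (2:ℝ) ^ (-(i:ℤ)) ≤ P w}, (2:ℝ) ^ i * P w.1)
        ≤ ∑ i ∈ Finset.Icc 1 istar, (2:ℝ) ^ i :=
    Finset.sum_le_sum key
  have hsum2 := biops_geom_sum_le istar
  refine le_trans (le_trans hsum1 hsum2) ?_
  -- now show 2^(istar+1) - 2 ≤ (4 / P wstar) * f k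
  rcases Nat.lt_or_ge istar 2 with h2 | h2
  · have h1 : istar = 1 := by omega
    subst h1
    have h4 : (4:ℝ) ≤ 4 / P wstar * f k := by
      rw [div_mul_eq_mul_div, le_div_iff₀ hP]
      nlinarith
    norm_num
    linarith
  · -- istar - 1 is not in the set
    have hnot : ¬ (0 < istar - 1 ∧ (f k : ℝ) ≤ 2 ^ (istar - 1) * P wstar) := by
      intro hmem
      have := hmin hmem
      omega
    have hgt : 2 ^ (istar - 1) * P wstar < (f k : ℝ) := by
      by_contra h
      exact hnot ⟨by omega, not_lt.mp h⟩
    have hpow : (2:ℝ) ^ (istar + 1) = 4 * 2 ^ (istar - 1) := by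
      have : istar + 1 = (istar - 1) + 2 := by omega
      rw [this, pow_add]; ring
    rw [hpow, div_mul_eq_mul_div]
    rw [le_div_iff₀ hP]
    nlinarith [pow_pos (by norm_num : (0:ℝ) < 2) (istar - 1)]
end

section
/- (4-bias-optimality of BIOPS.) Let ι be a countable index set and P : ι → ℝ a probability bias with 0 < P w for every w and ∑_w P w ≤ 1, and let T ≥ 0 be a total search time. Suppose some w ∈ ι solves the given problem within t steps, where t is a natural number with 1 ≤ t and t ≤ P w · T / 4. Then, letting i* be the least positive integer with 2^{i*} · P w ≥ t, the cumulative time budget ∑_{i=1}^{i*} ∑_{w' : P w' ≥ 2^{-i}} 2^i · P w' over phases 1, …, i* is at most T; i.e., the problem is solved within total search time T. -/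
lemma sum_Icc_two_pow (n : ℕ) :
    (∑ i ∈ Finset.Icc 1 n, (2:ℝ) ^ i) = 2 ^ (n + 1) - 2 := by
  induction n with
  | zero => simp
  | succ n ih =>
    rw [Finset.sum_Icc_succ_top (by omega), ih]
    ring

/-- 4-bias-optimality of BIOPS: if some `w` solves the given problem within
`t` steps, where `1 ≤ t` and `t ≤ P w * T / 4`, then, letting `i*` be the
least positive integer with `2^{i*} * P w ≥ t`, the cumulative time budget
over phases `1, …, i*` is at most `T`. -/
theorem biops_four_bias_optimal {ι : Type*} [Countable ι] (P : ι → ℝ)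
    (hPpos : ∀ w, 0 < P w) (hPsum : Summable P) (hPle : ∑' w, P w ≤ 1)
    (T : ℝ) (hT : 0 ≤ T) (w : ι) (t : ℕ) (ht1 : 1 ≤ t)
    (htT : (t : ℝ) ≤ P w * T / 4) (istar : ℕ)
    (histar : IsLeast {j : ℕ | 0 < j ∧ (t : ℝ) ≤ 2 ^ j * P w} istar) :
    (∑ i ∈ Finset.Icc 1 istar,
        ∑' w' : {w' : ι // (2:ℝ) ^ (-(i:ℤ)) ≤ P w'}, (2:ℝ) ^ i * P w'.1)
      ≤ T := by
  obtain ⟨⟨hipos, hige⟩, hmin⟩ := histar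
  have hPw : 0 < P w := hPpos w
  have hPw1 : P w ≤ 1 := le_trans (Summable.le_tsum hPsum w fun b _ => (hPpos b).le) hPle
  have ht1' : (1:ℝ) ≤ (t:ℝ) := by exact_mod_cast ht1
  have hT4 : (4:ℝ) ≤ T := by nlinarith
  have hinner : ∀ i : ℕ,
      (∑' w' : {w' : ι // (2:ℝ) ^ (-(i:ℤ)) ≤ P w'}, (2:ℝ) ^ i * P w'.1)
        ≤ 2 ^ i := by
    intro i
    rw [tsum_mul_left]
    have h1 : (∑' w' : {w' : ι // (2:ℝ) ^ (-(i:ℤ)) ≤ P w'}, P w'.1) ≤ 1 :=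
      le_trans (Summable.tsum_subtype_le P _ (fun a => (hPpos a).le) hPsum) hPle
    calc (2:ℝ) ^ i * ∑' w' : {w' : ι // (2:ℝ) ^ (-(i:ℤ)) ≤ P w'}, P w'.1
        ≤ 2 ^ i * 1 := by
          exact mul_le_mul_of_nonneg_left h1 (by positivity)
      _ = 2 ^ i := mul_one _
  have hsum : (∑ i ∈ Finset.Icc 1 istar,
      ∑' w' : {w' : ι // (2:ℝ) ^ (-(i:ℤ)) ≤ P w'}, (2:ℝ) ^ i * P w'.1)
        ≤ 2 ^ (istar + 1) - 2 := by
    calc _ ≤ ∑ i ∈ Finset.Icc 1 istar, (2:ℝ) ^ i :=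
          Finset.sum_le_sum fun i _ => hinner i
      _ = 2 ^ (istar + 1) - 2 := sum_Icc_two_pow istar
  refine hsum.trans ?_
  rcases eq_or_lt_of_le (show 1 ≤ istar from hipos) with h1 | h2
  · rw [← h1]; norm_num; linarith
  · -- istar ≥ 2 : minimality gives 2^(istar-1) * P w < t
    have hnot : ¬ ((t : ℝ) ≤ 2 ^ (istar - 1) * P w) := by
      intro hc
      have := hmin ⟨by omega, hc⟩
      omega
    push_neg at hnot
    have hpow : (2:ℝ) ^ (istar + 1) = 4 * 2 ^ (istar - 1) := by
      have : istar + 1 = (istar - 1) + 2 := by omega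
      rw [this]; ring
    nlinarith [pow_pos (show (0:ℝ) < 2 by norm_num) (istar - 1)]
end
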